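/- arXiv:2601.04839 — 2 statements merged into one kernel-verified Lean document; each statement's English description precedes it below -/
import Mathlib

section
/- For a real symmetric d×d matrix V with eigenvalues λ_1,...,λ_d and the truncation λ_k⁺ = max{ε, min{λ_k, κ}}, the truncated matrix V⁺ = Q diag(λ_k⁺) Qᵀ is a nearest point to V in S_d^{ε,κ} with respect to the Frobenius norm: for every W ∈ S_d^{ε,κ}, ‖V − V⁺‖_F ≤ ‖V − W‖_F. -/
/-!
Conjugation by the orthogonal `Q` preserves the Frobenius norm, so `V - W` may be replaced by
`diag λ - M` with `M = Qᵀ W Q`. The Rayleigh-quotient bounds on `W`, evaluated at the unit columns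
of `Q`, put every diagonal entry `M i i` in `[ε, κ]`, where the clamped `λ i⁺` is the nearest point
to `λ i`; discarding the off-diagonal entries of `diag λ - M` only decreases the norm.
-/

open Matrix

namespace Matrix

variable {m n R : Type*} [Fintype m] [Fintype n]

section CommRing

variable [CommRing R]

theorem trace_transpose_mul_self_eq_sum_sq (A : Matrix m n R) :
    trace (Aᵀ * A) = ∑ i, ∑ j, A i j ^ 2 := by
  simp only [trace, diag, mul_apply, transpose_apply, sq]
  exact Finset.sum_comm

theorem trace_transpose_mul_self_diagonal [DecidableEq n] (v : n → R) :
    trace ((diagonal v)ᵀ * diagonal v) = ∑ i, v i ^ 2 := by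
  simp [trace, sq]

theorem trace_transpose_mul_self_conj_orthogonal [DecidableEq n] {Q : Matrix n n R}
    (hQ : Qᵀ * Q = 1) (B : Matrix n n R) :
    trace ((Q * B * Qᵀ)ᵀ * (Q * B * Qᵀ)) = trace (Bᵀ * B) := by
  have hconj : (Q * B * Qᵀ)ᵀ * (Q * B * Qᵀ) = Q * (Bᵀ * B) * Qᵀ := by
    simp only [transpose_mul, transpose_transpose, Matrix.mul_assoc]
    rw [← Matrix.mul_assoc Qᵀ Q, hQ, Matrix.one_mul]
  rw [hconj, trace_mul_comm, ← Matrix.mul_assoc, hQ, Matrix.one_mul]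

theorem diag_conj_mem_Icc_of_rayleigh_bounds [DecidableEq n] [Preorder R]
    {Q W : Matrix n n R} {a b : R} (hQ : Qᵀ * Q = 1)
    (hW : ∀ x : n → R, a * (x ⬝ᵥ x) ≤ x ⬝ᵥ W *ᵥ x ∧ x ⬝ᵥ W *ᵥ x ≤ b * (x ⬝ᵥ x)) (i : n) :
    (Qᵀ * W * Q) i i ∈ Set.Icc a b := by
  have hunit : Qᵀ i ⬝ᵥ Qᵀ i = 1 := by
    rw [← one_apply_eq (α := R) i, ← hQ, mul_apply']
    rfl
  have hdiag : (Qᵀ * W * Q) i i = Qᵀ i ⬝ᵥ W *ᵥ Qᵀ i := mul_mul_apply _ _ _ i i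
  simpa [hunit, hdiag] using hW (Qᵀ i)

theorem sum_diag_sq_le_trace_transpose_mul_self [LinearOrder R] [IsStrictOrderedRing R]
    (A : Matrix n n R) :
    ∑ i, A i i ^ 2 ≤ trace (Aᵀ * A) := by
  rw [trace_transpose_mul_self_eq_sum_sq]
  exact Finset.sum_le_sum fun i _ =>
    Finset.single_le_sum (fun j _ => sq_nonneg (A i j)) (Finset.mem_univ i)

end CommRing

end Matrix

theorem sq_sub_max_min_le {R : Type*} [CommRing R] [LinearOrder R] [IsStrictOrderedRing R]
    {a b t : R} (ht : t ∈ Set.Icc a b) (l : R) :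
    (l - max a (min l b)) ^ 2 ≤ (l - t) ^ 2 := by
  obtain ⟨hat, htb⟩ := ht
  rcases le_total l a with hla | hal
  · rw [min_eq_left (hla.trans (hat.trans htb)), max_eq_left hla]
    nlinarith
  rcases le_total l b with hlb | hbl
  · rw [min_eq_left hlb, max_eq_right hal]
    nlinarith
  · rw [min_eq_right hbl, max_eq_right (hat.trans htb)]
    nlinarith

theorem truncation_is_nearest_point_general (d : ℕ) (ε κ : ℝ)
    (V Q : Matrix (Fin d) (Fin d) ℝ) (lam : Fin d → ℝ)
    (hQ : Qᵀ * Q = 1)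
    (hdecomp : V = Q * Matrix.diagonal lam * Qᵀ)
    (Vplus : Matrix (Fin d) (Fin d) ℝ)
    (hVplus : Vplus = Q * Matrix.diagonal (fun k => max ε (min (lam k) κ)) * Qᵀ) :
    ∀ W : Matrix (Fin d) (Fin d) ℝ, W.IsSymm →
      (∀ x : Fin d → ℝ,
        ε * (x ⬝ᵥ x) ≤ x ⬝ᵥ W.mulVec x ∧ x ⬝ᵥ W.mulVec x ≤ κ * (x ⬝ᵥ x)) →
      Real.sqrt (Matrix.trace ((V - Vplus)ᵀ * (V - Vplus))) ≤
        Real.sqrt (Matrix.trace ((V - W)ᵀ * (V - W))) := by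
  intro W _ hW
  set M := Qᵀ * W * Q
  have hW_conj : W = Q * M * Qᵀ := by
    have hQQt : Q * Qᵀ = 1 := mul_eq_one_comm.mp hQ
    rw [show Q * M * Qᵀ = Q * Qᵀ * W * (Q * Qᵀ) by simp only [M, Matrix.mul_assoc], hQQt,
      Matrix.one_mul, Matrix.mul_one]
  have hV_sub_Vplus :
      V - Vplus = Q * diagonal (fun k => lam k - max ε (min (lam k) κ)) * Qᵀ := by
    rw [hdecomp, hVplus, ← Matrix.sub_mul, ← Matrix.mul_sub, diagonal_sub]
  have hV_sub_W : V - W = Q * (diagonal lam - M) * Qᵀ := by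
    rw [hdecomp, hW_conj, ← Matrix.sub_mul, ← Matrix.mul_sub]
  apply Real.sqrt_le_sqrt
  rw [hV_sub_Vplus, hV_sub_W, trace_transpose_mul_self_conj_orthogonal hQ,
    trace_transpose_mul_self_conj_orthogonal hQ, trace_transpose_mul_self_diagonal]
  calc ∑ i, (lam i - max ε (min (lam i) κ)) ^ 2
      ≤ ∑ i, (diagonal lam - M) i i ^ 2 := Finset.sum_le_sum fun i _ => by
        simpa using sq_sub_max_min_le (diag_conj_mem_Icc_of_rayleigh_bounds hQ hW i) (lam i)
    _ ≤ trace ((diagonal lam - M)ᵀ * (diagonal lam - M)) :=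
        sum_diag_sq_le_trace_transpose_mul_self _

theorem truncation_is_nearest_point (d : ℕ) (ε κ : ℝ)
    (hε : 0 ≤ ε) (hεκ : ε < κ)
    (V Q : Matrix (Fin d) (Fin d) ℝ) (lam : Fin d → ℝ)
    (hQ : Qᵀ * Q = 1)
    (hdecomp : V = Q * Matrix.diagonal lam * Qᵀ)
    (Vplus : Matrix (Fin d) (Fin d) ℝ)
    (hVplus : Vplus = Q * Matrix.diagonal (fun k => max ε (min (lam k) κ)) * Qᵀ) :
    ∀ W : Matrix (Fin d) (Fin d) ℝ, W.IsSymm →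
      (∀ x : Fin d → ℝ,
        ε * (x ⬝ᵥ x) ≤ x ⬝ᵥ W.mulVec x ∧ x ⬝ᵥ W.mulVec x ≤ κ * (x ⬝ᵥ x)) →
      Real.sqrt (Matrix.trace ((V - Vplus)ᵀ * (V - Vplus))) ≤
        Real.sqrt (Matrix.trace ((V - W)ᵀ * (V - W))) :=
  truncation_is_nearest_point_general d ε κ V Q lam hQ hdecomp Vplus hVplus
end

section
/- If a bilinear form B on a finite-dimensional real inner product space H satisfies B(v,v) ≥ α‖v‖² for all v ∈ H with some α > 0 (and B is bilinear, hence continuous), and K ⊆ H is a nonempty closed convex set, then for every linear functional L on H there exists a unique u ∈ K such that B(u, v − u) ≥ L(v − u) for all v ∈ K. -/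
/-!
Uniqueness: subtracting the inequalities for two solutions `u₁, u₂` gives
`B (u₁ - u₂) (u₁ - u₂) ≤ 0`, so `u₁ = u₂` by coercivity.

Existence (Brezis): represent `B` by an operator `A` (`⟪A u, v⟫ = B u v`) and `L` by a vector `f`.
Then `u ∈ K` is a solution iff `u = P_K (u - ρ • (A u - f))` for some (any) `ρ > 0`, where `P_K`
is the nearest-point projection onto `K`. `P_K` is 1-Lipschitz and coercivity makes `id - ρ • A` a
strict contraction for small `ρ`, so Banach's fixed point theorem applies.
-/
open InnerProductSpace

theorem subsingleton_variationalInequality_solutions {M : Type*} [AddCommGroup M] [Module ℝ M]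
    (B : M →ₗ[ℝ] M →ₗ[ℝ] ℝ) (hB : ∀ v ≠ 0, 0 < B v v) (K : Set M) (L : M →ₗ[ℝ] ℝ) :
    {u | u ∈ K ∧ ∀ v ∈ K, L (v - u) ≤ B u (v - u)}.Subsingleton := by
  rintro u₁ ⟨hu₁, h₁⟩ u₂ ⟨hu₂, h₂⟩
  by_contra hne
  have hsum : B (u₁ - u₂) (u₁ - u₂) = -(B u₁ (u₂ - u₁) + B u₂ (u₁ - u₂)) := by
    simp only [map_sub, LinearMap.sub_apply]; ring
  have hL : L (u₂ - u₁) + L (u₁ - u₂) = 0 := by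
    rw [← map_add, sub_add_sub_cancel, sub_self, map_zero]
  linarith [hB _ (sub_ne_zero.2 hne), h₁ u₂ hu₂, h₂ u₁ hu₁]

section InnerProductSpace

variable {E : Type*} [NormedAddCommGroup E] [InnerProductSpace ℝ E]

theorem lipschitzWith_one_of_forall_inner_le_zero {K : Set E} {P : E → E} (hPK : ∀ z, P z ∈ K)
    (hP : ∀ z, ∀ w ∈ K, ⟪z - P z, w - P z⟫_ℝ ≤ 0) : LipschitzWith 1 P := by
  refine LipschitzWith.of_dist_le_mul fun z₁ z₂ => ?_
  rw [NNReal.coe_one, one_mul, dist_eq_norm, dist_eq_norm]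
  have hsq : ‖P z₁ - P z₂‖ ^ 2 ≤ ⟪z₁ - z₂, P z₁ - P z₂⟫_ℝ := by
    have h₁ := hP z₁ (P z₂) (hPK z₂)
    have h₂ := hP z₂ (P z₁) (hPK z₁)
    rw [← real_inner_self_eq_norm_sq]
    simp only [inner_sub_left, inner_sub_right, real_inner_comm] at h₁ h₂ ⊢
    linarith
  nlinarith [real_inner_le_norm (z₁ - z₂) (P z₁ - P z₂), norm_nonneg (P z₁ - P z₂),
    norm_nonneg (z₁ - z₂)]

theorem exists_lipschitzWith_one_forall_inner_le_zero {K : Set E} (hne : K.Nonempty)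
    (hK : IsComplete K) (hconv : Convex ℝ K) :
    ∃ P : E → E, (∀ z, P z ∈ K) ∧ (∀ z, ∀ w ∈ K, ⟪z - P z, w - P z⟫_ℝ ≤ 0) ∧
      LipschitzWith 1 P := by
  have h (z : E) : ∃ p ∈ K, ∀ w ∈ K, ⟪z - p, w - p⟫_ℝ ≤ 0 := by
    obtain ⟨p, hp, hmin⟩ := exists_norm_eq_iInf_of_complete_convex hne hK hconv z
    exact ⟨p, hp, (norm_eq_iInf_iff_real_inner_le_zero hconv hp).1 hmin⟩
  choose P hPK hP using h
  exact ⟨P, hPK, hP, lipschitzWith_one_of_forall_inner_le_zero hPK hP⟩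

theorem exists_norm_id_sub_smul_lt_one {A : E →L[ℝ] E} {C : ℝ} (hC : 0 < C)
    (hA : ∀ v, C * ‖v‖ * ‖v‖ ≤ ⟪A v, v⟫_ℝ) :
    ∃ ρ : ℝ, 0 < ρ ∧ ‖ContinuousLinearMap.id ℝ E - ρ • A‖ < 1 := by
  -- any `ρ < 2C / ‖A‖²` works; this one keeps `ρ * C ≤ 1` and avoids dividing by `‖A‖ = 0`
  set ρ := C / (‖A‖ ^ 2 + C ^ 2)
  have hρ : 0 < ρ := by positivity
  have hρA : ρ * ‖A‖ ^ 2 = C - ρ * C ^ 2 := by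
    have : ρ * (‖A‖ ^ 2 + C ^ 2) = C := div_mul_cancel₀ _ (by positivity)
    linarith
  have hρC : 0 < ρ * C ∧ ρ * C ≤ 1 := ⟨by positivity, by nlinarith [sq_nonneg ‖A‖]⟩
  refine ⟨ρ, hρ, lt_of_le_of_lt (ContinuousLinearMap.opNorm_le_bound _ (by linarith)
    fun v => ?_) (by linarith : 1 - ρ * C / 2 < 1)⟩
  have hAv : ‖A v‖ ^ 2 ≤ ‖A‖ ^ 2 * ‖v‖ ^ 2 := by
    rw [← mul_pow]; gcongr; exact A.le_opNorm v
  have hsq : ‖v - ρ • A v‖ ^ 2 ≤ ((1 - ρ * C / 2) * ‖v‖) ^ 2 :=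
    calc ‖v - ρ • A v‖ ^ 2 = ‖v‖ ^ 2 - 2 * ρ * ⟪A v, v⟫_ℝ + ρ ^ 2 * ‖A v‖ ^ 2 := by
          rw [norm_sub_sq_real, real_inner_smul_right, norm_smul, Real.norm_of_nonneg hρ.le,
            real_inner_comm]; ring
      _ ≤ (1 - ρ * C - (ρ * C) ^ 2) * ‖v‖ ^ 2 := by
          nlinarith [mul_le_mul_of_nonneg_left (hA v) hρ.le,
            mul_le_mul_of_nonneg_left hAv (sq_nonneg ρ),
            congrArg (· * (ρ * ‖v‖ ^ 2)) hρA]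
      _ ≤ ((1 - ρ * C / 2) * ‖v‖) ^ 2 := by nlinarith [sq_nonneg (ρ * C * ‖v‖)]
  simpa using (abs_le_of_sq_le_sq' hsq (by nlinarith [norm_nonneg v])).2

theorem IsCoercive.exists_forall_le_apply_sub [CompleteSpace E] {B : E →L[ℝ] E →L[ℝ] ℝ}
    (hB : IsCoercive B) {K : Set E} (hne : K.Nonempty) (hcl : IsClosed K) (hconv : Convex ℝ K)
    (L : E →L[ℝ] ℝ) : ∃ u ∈ K, ∀ v ∈ K, L (v - u) ≤ B u (v - u) := by
  obtain ⟨C, hC, hBC⟩ := hB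
  set A := continuousLinearMapOfBilin B
  have hA (v w : E) : ⟪A v, w⟫_ℝ = B v w := continuousLinearMapOfBilin_apply B v w
  set f := (toDual ℝ E).symm L
  have hf (w : E) : ⟪f, w⟫_ℝ = L w := toDual_symm_apply
  obtain ⟨P, hPK, hP, hPlip⟩ :=
    exists_lipschitzWith_one_forall_inner_le_zero hne hcl.isComplete hconv
  obtain ⟨ρ, hρ, hS⟩ := exists_norm_id_sub_smul_lt_one hC fun v => (hBC v).trans_eq (hA v v).symm
  set S := ContinuousLinearMap.id ℝ E - ρ • A
  have hT : ContractingWith ‖S‖₊ fun u => P (S u + ρ • f) := by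
    refine ⟨hS, ?_⟩
    have hSf : LipschitzWith ‖S‖₊ fun u => S u + ρ • f :=
      LipschitzWith.of_dist_le_mul fun x y => by
        simpa only [dist_add_right] using S.lipschitz.dist_le_mul x y
    rw [← one_mul ‖S‖₊]
    exact hPlip.comp hSf
  set u := ContractingWith.fixedPoint _ hT
  have hu : P (S u + ρ • f) = u := hT.fixedPoint_isFixedPt
  refine ⟨u, hu ▸ hPK _, fun v hv => ?_⟩
  have h := hP (S u + ρ • f) v hv
  have hSu : S u + ρ • f - P (S u + ρ • f) = -(ρ • (A u - f)) := by
    rw [hu]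
    simp only [S, sub_apply, ContinuousLinearMap.id_apply, smul_apply, smul_sub]
    abel
  rw [hSu, hu, inner_neg_left, real_inner_smul_left, inner_sub_left, hA, hf, neg_nonpos] at h
  exact sub_nonneg.1 ((mul_nonneg_iff_of_pos_left hρ).1 h)

end InnerProductSpace

theorem stampacchia_finite_dim {H : Type*} [NormedAddCommGroup H]
    [InnerProductSpace ℝ H] [FiniteDimensional ℝ H]
    (B : H →ₗ[ℝ] H →ₗ[ℝ] ℝ) (α : ℝ) (hα : 0 < α)
    (hcoer : ∀ v : H, α * ‖v‖ ^ 2 ≤ B v v)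
    (K : Set H) (hne : K.Nonempty) (hcl : IsClosed K) (hconv : Convex ℝ K)
    (L : H →ₗ[ℝ] ℝ) :
    ∃! u : H, u ∈ K ∧ ∀ v ∈ K, L (v - u) ≤ B u (v - u) := by
  let B' : H →L[ℝ] H →L[ℝ] ℝ :=
    LinearMap.toContinuousLinearMap (LinearMap.toContinuousLinearMap.toLinearMap ∘ₗ B)
  have hB' : IsCoercive B' := ⟨α, hα, fun v => by simpa [B', sq, mul_assoc] using hcoer v⟩
  obtain ⟨u, huK, hu⟩ :=
    hB'.exists_forall_le_apply_sub hne hcl hconv (LinearMap.toContinuousLinearMap L)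
  have hB (v : H) (hv : v ≠ 0) : 0 < B v v := by
    linarith [hcoer v, mul_pos hα (pow_pos (norm_pos_iff.2 hv) 2)]
  exact ⟨u, ⟨huK, hu⟩, fun w hw =>
    subsingleton_variationalInequality_solutions B hB K L hw ⟨huK, hu⟩⟩
end
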